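/- arXiv:1606.06570 — 3 statements merged into one kernel-verified Lean document; each statement's English description precedes it below -/
import Mathlib

section
/- The classes of functions implementable by one round of a circuit coincide regardless of register types: Fun_S^1 = Fun_M^1. -/
set_option linter.unusedVariables false

attribute [local instance] Classical.propDecidable

/-- Signal values: stable `zero`, `one`, and metastable `meta`. -/
inductive BM : Type
  | zero
  | one
  | metastable
  deriving DecidableEq

/-- Embedding of stable Boolean values into `BM`. -/
def BM.ofBool : Bool → BM
  | false => BM.zero
  | true => BM.one

/-- `inResM x y` means `y ∈ ResM(x)`, the set of partial resolutions of `x`. -/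
def inResM {k : ℕ} (x y : Fin k → BM) : Prop :=
  ∀ i, x i = y i ∨ x i = BM.metastable

/-- `inRes x y` means `y ∈ Res(x)`, i.e. `y` is a complete (stable) resolution of `x`. -/
def inRes {k : ℕ} (x y : Fin k → BM) : Prop :=
  inResM x y ∧ ∀ i, y i ≠ BM.metastable

/-- The complete resolutions of `x`, viewed as Boolean words. -/
def boolRes {k : ℕ} (x : Fin k → BM) : Set (Fin k → Bool) :=
  { z | ∀ i, x i = BM.ofBool (z i) ∨ x i = BM.metastable }

/-- The metastable (Kleene) extension `f_M : BM^k → BM` of a Boolean function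
`f : B^k → B`: it outputs a stable value `b` iff all complete resolutions of the
input evaluate to `b` under `f`, and `meta` otherwise. -/
noncomputable def kleene {k : ℕ} (f : (Fin k → Bool) → Bool) (x : Fin k → BM) : BM :=
  if ∀ z ∈ boolRes x, f z = false then BM.zero
  else if ∀ z ∈ boolRes x, f z = true then BM.one
  else BM.metastable

/-- Combinational logic with `m` input nodes: formulas built from inputs,
`BM`-constants (gates of indegree 0), and gates computing the metastable extension
of a Boolean function of their in-neighbors.  (A DAG evaluates exactly like the
formula obtained by unsharing, so this faithfully captures evaluation of
combinational logic DAGs.) -/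
inductive Comb (m : ℕ) : Type
  | input : Fin m → Comb m
  | const : BM → Comb m
  | gate : (j : ℕ) → ((Fin j → Bool) → Bool) → (Fin j → Comb m) → Comb m

/-- Recursive evaluation of combinational logic on input `x ∈ BM^m`. -/
noncomputable def Comb.eval {m : ℕ} (x : Fin m → BM) : Comb m → BM
  | .input i => x i
  | .const b => b
  | .gate _ f cs => kleene f (fun t => (cs t).eval x)

/-- Register types: simple, mask-0, mask-1. -/
inductive RegType : Type
  | simple
  | mask0
  | mask1
  deriving DecidableEq

/-- `regRead t b (o, b')` holds iff a register of type `t` in state `b` can be read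
with read value `o`, moving to state `b'`:  a register in a stable state yields that
state and keeps it; a simple register in state `meta` yields `meta` and stays `meta`;
a mask-`c` register in state `meta` either yields `c` staying in state `meta`, or
yields `meta` changing its state to `1 - c`. -/
def regRead : RegType → BM → BM × BM → Prop
  | _, BM.zero, p => p = (BM.zero, BM.zero)
  | _, BM.one, p => p = (BM.one, BM.one)
  | RegType.simple, BM.metastable, p => p = (BM.metastable, BM.metastable)
  | RegType.mask0, BM.metastable, p => p = (BM.zero, BM.metastable) ∨ p = (BM.metastable, BM.one)
  | RegType.mask1, BM.metastable, p => p = (BM.one, BM.metastable) ∨ p = (BM.metastable, BM.zero)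

/-- A circuit with `m` input, `k` local and `n` output registers: a type for each
register, combinational logic with `m + k` input nodes (one per non-output register)
and `k + n` output nodes (one per non-input register), and an initialization of the
non-input registers. -/
structure Circuit (m k n : ℕ) : Type where
  inType : Fin m → RegType
  locType : Fin k → RegType
  outType : Fin n → RegType
  logic : Fin (k + n) → Comb (m + k)
  init : Fin (k + n) → BM

/-- A state of a circuit: values of input, local, and output registers. -/
structure CState (m k n : ℕ) : Type where
  inp : Fin m → BM
  loc : Fin k → BM
  out : Fin n → BM

/-- A state as a word in `BM^{m+k+n}`. -/
def CState.toVec {m k n : ℕ} (s : CState m k n) : Fin (m + (k + n)) → BM :=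
  Fin.append s.inp (Fin.append s.loc s.out)

/-- Read phase: `o ∈ BM^{m+k}` are possible read values of the non-output registers
in state `s`, and `ι'` the corresponding successor states of the input registers. -/
def ReadRel {m k n : ℕ} (C : Circuit m k n) (s : CState m k n)
    (o : Fin (m + k) → BM) (ι' : Fin m → BM) : Prop :=
  (∀ i : Fin m, regRead (C.inType i) (s.inp i) (o (Fin.castAdd k i), ι' i)) ∧
  (∀ j : Fin k, ∃ st', regRead (C.locType j) (s.loc j) (o (Fin.natAdd m j), st'))

/-- Evaluation phase: `f^G` applied to the read values. -/
noncomputable def evalLogic {m k n : ℕ} (C : Circuit m k n) (o : Fin (m + k) → BM) :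
    Fin (k + n) → BM :=
  fun j => (C.logic j).eval o

/-- `Write^C(s)`: possible values written to the non-input registers. -/
def WriteSet {m k n : ℕ} (C : Circuit m k n) (s : CState m k n) :
    Set (Fin (k + n) → BM) :=
  { w | ∃ o ι', ReadRel C s o ι' ∧ inResM (evalLogic C o) w }

/-- Successor-state relation: read all non-output registers, evaluate the logic,
and write an arbitrary partial resolution of the result to the non-input registers. -/
def Succ {m k n : ℕ} (C : Circuit m k n) (s s' : CState m k n) : Prop :=
  ∃ o ι', ReadRel C s o ι' ∧ s'.inp = ι' ∧
    inResM (evalLogic C o) (Fin.append s'.loc s'.out)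

/-- `reach C r s₀ = S^C_r(s₀)`: states reachable in `r` rounds from `s₀`. -/
def reach {m k n : ℕ} (C : Circuit m k n) : ℕ → CState m k n → Set (CState m k n)
  | 0, s => {s}
  | r + 1, s => { t | ∃ u ∈ reach C r s, Succ C u t }

/-- The initial state of `C` with input `ι`. -/
def initState {m k n : ℕ} (C : Circuit m k n) (ι : Fin m → BM) : CState m k n :=
  ⟨ι, fun j => C.init (Fin.castAdd n j), fun j => C.init (Fin.natAdd k j)⟩

/-- `C_r(ι)`: possible outputs after `r` rounds on input `ι`. -/
def Cout {m k n : ℕ} (C : Circuit m k n) (r : ℕ) (ι : Fin m → BM) :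
    Set (Fin n → BM) :=
  { y | ∃ s ∈ reach C r (initState C ι), y = s.out }

/-- `r` rounds of `C` implement `f` iff `C_r(ι) ⊆ f(ι)` for all inputs `ι`. -/
def Implements {m k n : ℕ} (C : Circuit m k n) (r : ℕ)
    (f : (Fin m → BM) → Set (Fin n → BM)) : Prop :=
  ∀ ι, Cout C r ι ⊆ f ι

/-- All registers of the circuit are simple. -/
def OnlySimple {m k n : ℕ} (C : Circuit m k n) : Prop :=
  (∀ i, C.inType i = RegType.simple) ∧ (∀ j, C.locType j = RegType.simple) ∧
    (∀ j, C.outType j = RegType.simple)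

/-- `Fun_S^r`: functions implementable by `r` rounds of circuits with only simple
registers. -/
def FunS (r m n : ℕ) : Set ((Fin m → BM) → Set (Fin n → BM)) :=
  { f | ∃ k, ∃ C : Circuit m k n, OnlySimple C ∧ Implements C r f }

/-- `Fun_M^r`: functions implementable by `r` rounds of circuits with arbitrary
register types. -/
def FunM (r m n : ℕ) : Set ((Fin m → BM) → Set (Fin n → BM)) :=
  { f | ∃ k, ∃ C : Circuit m k n, Implements C r f }

/-- A pivotal sequence over `BM^N`: consecutive elements differ in exactly one bit,
and that bit is `meta` in one of the two elements. -/
def PivotalSeq {N ℓ : ℕ} (x : Fin (ℓ + 1) → Fin N → BM) : Prop :=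
  ∀ i : Fin ℓ,
    ∃ j : Fin N,
      x i.castSucc j ≠ x i.succ j ∧
      (x i.castSucc j = BM.metastable ∨ x i.succ j = BM.metastable) ∧
      ∀ j' : Fin N, x i.castSucc j' ≠ x i.succ j' → j' = j

/-- A function `f : BM^m → Pow(BM^n)` is natural iff it is bit-wise and closed
(a product of component functions each taking values in `{{0}, {1}, BM}`)
and specific (stabilizing the input restricts the output). -/
def IsNatural {m n : ℕ} (f : (Fin m → BM) → Set (Fin n → BM)) : Prop :=
  (∃ g : Fin n → (Fin m → BM) → Set BM,
      (∀ i x, g i x = {BM.zero} ∨ g i x = {BM.one} ∨ g i x = (Set.univ : Set BM)) ∧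
      (∀ x, f x = { y | ∀ i, y i ∈ g i x })) ∧
  (∀ x y, inRes x y → f y ⊆ f x)

/-- The `i`-th component of the metastable closure of `f : B^m → B^n`. -/
noncomputable def mclosureC {m n : ℕ} (f : (Fin m → Bool) → Fin n → Bool)
    (x : Fin m → BM) (i : Fin n) : Set BM :=
  if ∀ z ∈ boolRes x, f z i = false then {BM.zero}
  else if ∀ z ∈ boolRes x, f z i = true then {BM.one}
  else Set.univ

/-- The metastable closure `[f]_M : BM^m → Pow(BM^n)` of `f : B^m → B^n`. -/
noncomputable def mclosure {m n : ℕ} (f : (Fin m → Bool) → Fin n → Bool)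
    (x : Fin m → BM) : Set (Fin n → BM) :=
  { y | ∀ i, y i ∈ mclosureC f x i }

/-!
Every register type can reproduce the read value of a simple register (in state `M` a mask
register may yield `M` too; it merely moves to a different state). Hence making all registers
of a circuit simple only shrinks the set of possible read values, and so, in the first round,
the set of possible outputs. Later rounds would see the changed register states, which is why
the argument is specific to one round.
-/

def Circuit.toSimple {m k n : ℕ} (C : Circuit m k n) : Circuit m k n :=
  { C with inType := fun _ => .simple, locType := fun _ => .simple, outType := fun _ => .simple }

lemma Circuit.onlySimple_toSimple {m k n : ℕ} (C : Circuit m k n) : OnlySimple C.toSimple :=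
  ⟨fun _ => rfl, fun _ => rfl, fun _ => rfl⟩

lemma regRead_of_regRead_simple {t : RegType} {b v s : BM}
    (h : regRead .simple b (v, s)) : ∃ s', regRead t b (v, s') := by
  cases b <;> simp only [regRead, Prod.mk.injEq] at h <;> obtain ⟨rfl, rfl⟩ := h <;>
    cases t <;> simp [regRead]

lemma ReadRel.of_toSimple {m k n : ℕ} {C : Circuit m k n} {s : CState m k n}
    {o : Fin (m + k) → BM} {ι' : Fin m → BM} (h : ReadRel C.toSimple s o ι') :
    ∃ ι'', ReadRel C s o ι'' := by
  choose ι'' hι'' using fun i => regRead_of_regRead_simple (t := C.inType i) (h.1 i)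
  refine ⟨ι'', hι'', fun j => ?_⟩
  obtain ⟨s', hs'⟩ := h.2 j
  exact regRead_of_regRead_simple hs'

lemma Succ.of_toSimple {m k n : ℕ} {C : Circuit m k n} {s t : CState m k n}
    (h : Succ C.toSimple s t) : ∃ ι', Succ C s ⟨ι', t.loc, t.out⟩ := by
  obtain ⟨o, _, hread, -, hwrite⟩ := h
  obtain ⟨ι', hread'⟩ := ReadRel.of_toSimple hread
  exact ⟨ι', o, ι', hread', rfl, hwrite⟩

lemma Cout_toSimple_one_subset {m k n : ℕ} (C : Circuit m k n) (ι : Fin m → BM) :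
    Cout C.toSimple 1 ι ⊆ Cout C 1 ι := by
  rintro _ ⟨t, ⟨_, rfl, hsucc⟩, rfl⟩
  obtain ⟨ι', hsucc'⟩ := Succ.of_toSimple hsucc
  exact ⟨⟨ι', t.loc, t.out⟩, ⟨initState C ι, rfl, hsucc'⟩, rfl⟩

lemma Implements.toSimple_one {m k n : ℕ} {C : Circuit m k n}
    {f : (Fin m → BM) → Set (Fin n → BM)} (h : Implements C 1 f) :
    Implements C.toSimple 1 f :=
  fun ι => (Cout_toSimple_one_subset C ι).trans (h ι)

lemma funS_subset_funM (r m n : ℕ) : FunS r m n ⊆ FunM r m n :=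
  fun _ ⟨k, C, _, hC⟩ => ⟨k, C, hC⟩

/-- `Fun_S^1 = Fun_M^1`: the functions implementable by one round of a
circuit do not depend on the available register types. -/
theorem funS_one_eq_funM_one (m n : ℕ) : FunS 1 m n = FunM 1 m n := by
  refine (funS_subset_funM 1 m n).antisymm ?_
  rintro f ⟨k, C, hC⟩
  exact ⟨k, C.toSimple, C.onlySimple_toSimple, hC.toSimple_one⟩
end

section
/- For any circuit C with m input and n output registers, the one-round behavior has a product structure: there exist component functions g_0, …, g_{n−1} : BM^m → {{0}, {1}, BM} such that C_1(ι) = g_0(ι) × … × g_{n−1}(ι) for every input ι ∈ BM^m. -/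
set_option linter.unusedVariables false

attribute [local instance] Classical.propDecidable

/-- `ResM(b)` for a single signal `b`, so that `inResM x y ↔ ∀ i, y i ∈ (x i).resolutions`. -/
def BM.resolutions (b : BM) : Set BM :=
  { y | b = y ∨ b = BM.metastable }

lemma BM.resolutions_trichotomy (b : BM) :
    b.resolutions = {BM.zero} ∨ b.resolutions = {BM.one} ∨ b.resolutions = Set.univ := by
  cases b
  · exact Or.inl (Set.ext fun y => by simp [BM.resolutions, eq_comm])
  · exact Or.inr (Or.inl (Set.ext fun y => by simp [BM.resolutions, eq_comm]))
  · exact Or.inr (Or.inr (Set.ext fun y => by simp [BM.resolutions]))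

lemma BM.resolutions_trans {a b c : BM} (hb : b ∈ a.resolutions) (hc : c ∈ b.resolutions) :
    c ∈ a.resolutions := by
  rcases hb with rfl | ha
  · exact hc
  · exact Or.inr ha

lemma inResM_trans {k : ℕ} {x y z : Fin k → BM} (hxy : inResM x y) (hyz : inResM y z) :
    inResM x z :=
  fun i => BM.resolutions_trans (hxy i) (hyz i)

lemma regRead_fst_mem_resolutions {t : RegType} {b : BM} {p : BM × BM} (h : regRead t b p) :
    p.1 ∈ b.resolutions := by
  cases b with
  | zero => cases t <;> simp_all [regRead, BM.resolutions]
  | one => cases t <;> simp_all [regRead, BM.resolutions]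
  | metastable => exact Or.inr rfl

lemma exists_regRead_self (t : RegType) (b : BM) : ∃ b', regRead t b (b, b') := by
  cases t <;> cases b
  · exact ⟨BM.zero, rfl⟩
  · exact ⟨BM.one, rfl⟩
  · exact ⟨BM.metastable, rfl⟩
  · exact ⟨BM.zero, rfl⟩
  · exact ⟨BM.one, rfl⟩
  · exact ⟨BM.one, Or.inr rfl⟩
  · exact ⟨BM.zero, rfl⟩
  · exact ⟨BM.one, rfl⟩
  · exact ⟨BM.zero, Or.inr rfl⟩

lemma boolRes_nonempty {k : ℕ} (x : Fin k → BM) : (boolRes x).Nonempty := by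
  refine ⟨fun i => decide (x i = BM.one), fun i => ?_⟩
  cases h : x i <;> simp [BM.ofBool, h]

lemma boolRes_anti {k : ℕ} {x x' : Fin k → BM} (h : inResM x x') :
    boolRes x' ⊆ boolRes x :=
  fun z hz i => BM.resolutions_trans (h i) (hz i)

lemma kleene_mem_resolutions {k : ℕ} (f : (Fin k → Bool) → Bool) {x x' : Fin k → BM}
    (h : inResM x x') : kleene f x' ∈ (kleene f x).resolutions := by
  unfold kleene
  by_cases h0 : ∀ z ∈ boolRes x, f z = false
  · have h0' : ∀ z ∈ boolRes x', f z = false := fun z hz => h0 z (boolRes_anti h hz)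
    rw [if_pos h0, if_pos h0']
    exact Or.inl rfl
  by_cases h1 : ∀ z ∈ boolRes x, f z = true
  · have h1' : ∀ z ∈ boolRes x', f z = true := fun z hz => h1 z (boolRes_anti h hz)
    have h0' : ¬ ∀ z ∈ boolRes x', f z = false := by
      obtain ⟨z, hz⟩ := boolRes_nonempty x'
      exact fun hc => absurd (hc z hz) (by simp [h1' z hz])
    rw [if_neg h0, if_pos h1, if_neg h0', if_pos h1']
    exact Or.inl rfl
  rw [if_neg h0, if_neg h1]
  exact Or.inr rfl

lemma Comb.eval_mem_resolutions {m : ℕ} {x x' : Fin m → BM} (h : inResM x x') (c : Comb m) :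
    c.eval x' ∈ (c.eval x).resolutions := by
  induction c with
  | input i => exact h i
  | const b => exact Or.inl rfl
  | gate j f cs ih => exact kleene_mem_resolutions f ih

lemma evalLogic_inResM {m k n : ℕ} (C : Circuit m k n) {o o' : Fin (m + k) → BM}
    (h : inResM o o') : inResM (evalLogic C o) (evalLogic C o') :=
  fun j => Comb.eval_mem_resolutions h (C.logic j)

def CState.nonOutput {m k n : ℕ} (s : CState m k n) : Fin (m + k) → BM :=
  Fin.append s.inp s.loc

lemma ReadRel.inResM_nonOutput {m k n : ℕ} {C : Circuit m k n} {s : CState m k n}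
    {o : Fin (m + k) → BM} {ι' : Fin m → BM} (h : ReadRel C s o ι') :
    inResM s.nonOutput o := by
  refine (Fin.forall_fin_add _).2 ⟨fun i => ?_, fun j => ?_⟩
  · simpa [CState.nonOutput, BM.resolutions] using regRead_fst_mem_resolutions (h.1 i)
  · obtain ⟨b', hb'⟩ := h.2 j
    simpa [CState.nonOutput, BM.resolutions] using regRead_fst_mem_resolutions hb'

lemma exists_readRel_nonOutput {m k n : ℕ} (C : Circuit m k n) (s : CState m k n) :
    ∃ ι', ReadRel C s s.nonOutput ι' := by
  choose ι' hι' using fun i => exists_regRead_self (C.inType i) (s.inp i)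
  refine ⟨ι', fun i => ?_, fun j => ?_⟩
  · simpa [CState.nonOutput] using hι' i
  · simpa [CState.nonOutput] using exists_regRead_self (C.locType j) (s.loc j)

/-- Every read value resolves the register's state, and reading the state itself is always
possible; by monotonicity of the logic, that least resolved read determines all outputs. -/
lemma exists_succ_out_eq_iff {m k n : ℕ} (C : Circuit m k n) (s : CState m k n)
    (y : Fin n → BM) :
    (∃ t, Succ C s t ∧ y = t.out) ↔
      ∀ i, y i ∈ (evalLogic C s.nonOutput (Fin.natAdd k i)).resolutions := by
  constructor
  · rintro ⟨t, ⟨o, ι', hread, -, hwrite⟩, rfl⟩ i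
    have := inResM_trans (evalLogic_inResM C hread.inResM_nonOutput) hwrite (Fin.natAdd k i)
    rwa [Fin.append_right] at this
  · intro hy
    obtain ⟨ι', hread⟩ := exists_readRel_nonOutput C s
    refine ⟨⟨ι', fun j => evalLogic C s.nonOutput (Fin.castAdd n j), y⟩,
      ⟨s.nonOutput, ι', hread, rfl, (Fin.forall_fin_add _).2 ⟨fun j => ?_, fun i => ?_⟩⟩, rfl⟩
    · rw [Fin.append_left]
      exact Or.inl rfl
    · rw [Fin.append_right]
      exact hy i

/-- the one-round behavior of any circuit has a product structure:
`C_1 = g_0 × ⋯ × g_{n-1}` with `g_i : BM^m → {{0}, {1}, BM}`. -/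
theorem cout_one_product_structure {m k n : ℕ} (C : Circuit m k n) :
    ∃ g : Fin n → (Fin m → BM) → Set BM,
      (∀ i ι, g i ι = {BM.zero} ∨ g i ι = {BM.one} ∨ g i ι = (Set.univ : Set BM)) ∧
      ∀ ι, Cout C 1 ι = { y | ∀ i, y i ∈ g i ι } := by
  refine ⟨fun i ι => (evalLogic C (initState C ι).nonOutput (Fin.natAdd k i)).resolutions,
    fun i ι => BM.resolutions_trichotomy _, fun ι => Set.ext fun y => ?_⟩
  simp only [Cout, reach, Set.mem_singleton_iff, exists_eq_left, Set.mem_ofPred_eq]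
  rw [← exists_succ_out_eq_iff]
end

section
/- Circuits with only simple registers can be unrolled: given a circuit C all of whose registers are simple such that r ∈ N rounds of C implement a function f : BM^m → Pow(BM^n), there exists a circuit C' such that one round of C' implements f. -/
set_option linter.unusedVariables false

attribute [local instance] Classical.propDecidable

/-!
In a circuit with only simple registers, reading never resolves metastability, so the only
nondeterminism is in the write phase, and writing the computed value unchanged is always
allowed. Along the run that never resolves anything, the local registers after `t` rounds are
a function of the input alone, computed by the combinational logic of `C` substituted into
itself `t` times. One round of the logic of `C` fed with these values, followed by an arbitrary
resolution of the result, is the last round of such a run of `r = t + 1` rounds of `C`, so it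
produces only outputs that `r` rounds of `C` can produce.
-/

namespace Comb

def subst {m m' : ℕ} (σ : Fin m → Comb m') : Comb m → Comb m'
  | .input i => σ i
  | .const b => .const b
  | .gate j f cs => .gate j f fun t => subst σ (cs t)

theorem eval_subst {m m' : ℕ} (σ : Fin m → Comb m') (x : Fin m' → BM) :
    ∀ c : Comb m, (c.subst σ).eval x = c.eval fun i => (σ i).eval x
  | .input _ => rfl
  | .const _ => rfl
  | .gate j f cs => by
      simp only [subst, eval]
      congr 1
      funext t
      exact eval_subst σ x (cs t)

end Comb

theorem inResM_append_iff {k n : ℕ} (x : Fin (k + n) → BM) (a : Fin k → BM)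
    (b : Fin n → BM) :
    inResM x (Fin.append a b) ↔
      inResM (fun j => x (Fin.castAdd n j)) a ∧ inResM (fun j => x (Fin.natAdd k j)) b := by
  simp only [inResM, Fin.forall_fin_add, Fin.append_left, Fin.append_right]

theorem regRead_simple_iff {b : BM} {p : BM × BM} : regRead .simple b p ↔ p = (b, b) := by
  cases b <;> simp [regRead]

section SimpleReads

variable {m k n : ℕ} {C : Circuit m k n}
  (hin : ∀ i, C.inType i = .simple) (hloc : ∀ j, C.locType j = .simple)
include hin hloc

theorem readRel_iff_of_simple {s : CState m k n} {o : Fin (m + k) → BM} {ι' : Fin m → BM} :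
    ReadRel C s o ι' ↔ o = Fin.append s.inp s.loc ∧ ι' = s.inp := by
  simp only [ReadRel, hin, hloc, regRead_simple_iff, Prod.mk.injEq, exists_eq_right,
    forall_and, funext_iff, Fin.forall_fin_add, Fin.append_left, Fin.append_right]
  tauto

theorem succ_iff_of_simple {s s' : CState m k n} :
    Succ C s s' ↔
      s'.inp = s.inp ∧
        inResM (evalLogic C (Fin.append s.inp s.loc)) (Fin.append s'.loc s'.out) := by
  simp only [Succ, readRel_iff_of_simple hin hloc]
  constructor
  · rintro ⟨o, ι', ⟨rfl, rfl⟩, hinp, hw⟩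
    exact ⟨hinp, hw⟩
  · rintro ⟨hinp, hw⟩
    exact ⟨_, _, ⟨rfl, rfl⟩, hinp, hw⟩

end SimpleReads

namespace Circuit

variable {m k n : ℕ}

noncomputable def canonicalLoc (C : Circuit m k n) (ι : Fin m → BM) : ℕ → Fin k → BM
  | 0 => fun j => C.init (Fin.castAdd n j)
  | t + 1 => fun j => evalLogic C (Fin.append ι (C.canonicalLoc ι t)) (Fin.castAdd n j)

def unrollSubst (C : Circuit m k n) : ℕ → Fin (m + k) → Comb (m + k)
  | 0 => Fin.addCases (fun i => .input (Fin.castAdd k i))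
      fun j => .const (C.init (Fin.castAdd n j))
  | t + 1 => Fin.addCases (fun i => .input (Fin.castAdd k i))
      fun j => (C.logic (Fin.castAdd n j)).subst (C.unrollSubst t)

theorem eval_unrollSubst (C : Circuit m k n) (ι : Fin m → BM) (loc : Fin k → BM) :
    ∀ t, (fun i => (C.unrollSubst t i).eval (Fin.append ι loc)) =
      Fin.append ι (C.canonicalLoc ι t)
  | 0 => by
      funext i
      refine Fin.addCases (fun i => ?_) (fun j => ?_) i <;>
        simp [unrollSubst, Comb.eval, canonicalLoc]
  | t + 1 => by
      funext i
      refine Fin.addCases (fun i => ?_) (fun j => ?_) i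
      · simp [unrollSubst, Comb.eval]
      · simp only [unrollSubst, Fin.addCases_right, Fin.append_right, Comb.eval_subst,
          eval_unrollSubst C ι loc t]
        rfl

def unroll (C : Circuit m k n) (t : ℕ) : Circuit m k n where
  inType _ := .simple
  locType _ := .simple
  outType _ := .simple
  logic j := (C.logic j).subst (C.unrollSubst t)
  init := C.init

theorem evalLogic_unroll (C : Circuit m k n) (t : ℕ) (ι : Fin m → BM) (loc : Fin k → BM) :
    evalLogic (C.unroll t) (Fin.append ι loc) =
      evalLogic C (Fin.append ι (C.canonicalLoc ι t)) := by
  funext j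
  simp only [evalLogic, unroll, Comb.eval_subst, eval_unrollSubst]

section SimpleReads

variable {C : Circuit m k n}
  (hin : ∀ i, C.inType i = .simple) (hloc : ∀ j, C.locType j = .simple)
include hin hloc

theorem succ_canonicalLoc {ι : Fin m → BM} {t : ℕ} {s : CState m k n} (hinp : s.inp = ι)
    (hloc_t : s.loc = C.canonicalLoc ι t) {out : Fin n → BM}
    (hout : inResM (fun j => evalLogic C (Fin.append ι (C.canonicalLoc ι t)) (Fin.natAdd k j))
      out) :
    Succ C s ⟨ι, C.canonicalLoc ι (t + 1), out⟩ := by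
  rw [succ_iff_of_simple hin hloc, inResM_append_iff, hinp, hloc_t]
  exact ⟨rfl, fun _ => .inl rfl, hout⟩

theorem exists_mem_reach_canonicalLoc (ι : Fin m → BM) :
    ∀ t, ∃ s ∈ reach C t (initState C ι), s.inp = ι ∧ s.loc = C.canonicalLoc ι t
  | 0 => ⟨_, rfl, rfl, rfl⟩
  | t + 1 => by
      obtain ⟨s, hs, hinp, hloc_t⟩ := exists_mem_reach_canonicalLoc ι t
      exact ⟨_, ⟨s, hs, succ_canonicalLoc hin hloc hinp hloc_t fun _ => .inl rfl⟩, rfl, rfl⟩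

theorem cout_unroll_subset (t : ℕ) (ι : Fin m → BM) :
    Cout (C.unroll t) 1 ι ⊆ Cout C (t + 1) ι := by
  rintro _ ⟨s', ⟨_, rfl, hsucc⟩, rfl⟩
  rw [succ_iff_of_simple (fun _ => rfl) (fun _ => rfl), evalLogic_unroll, inResM_append_iff] at hsucc
  obtain ⟨s, hs, hinp, hloc_t⟩ := exists_mem_reach_canonicalLoc hin hloc ι t
  exact ⟨_, ⟨s, hs, succ_canonicalLoc hin hloc hinp hloc_t hsucc.2.2⟩, rfl⟩

end SimpleReads

end Circuit

/-- circuits with only simple registers can be unrolled: if `r ∈ ℕ`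
rounds of a circuit `C` with only simple registers implement `f`, then some circuit
`C'` implements `f` in one round. -/
theorem unroll_simple_circuits {m n : ℕ} (r k : ℕ) (hr : 0 < r)
    (C : Circuit m k n) (hC : OnlySimple C)
    (f : (Fin m → BM) → Set (Fin n → BM)) (hf : Implements C r f) :
    ∃ k' : ℕ, ∃ C' : Circuit m k' n, Implements C' 1 f := by
  obtain ⟨t, rfl⟩ := Nat.exists_eq_add_one.mpr hr
  exact ⟨k, C.unroll t, fun ι => (Circuit.cout_unroll_subset hC.1 hC.2.1 t ι).trans (hf ι)⟩
end
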